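/- Let L_Ω be the Lie derivative f ↦ {H_Ω, f} acting on homogeneous polynomials, with kernel N^(s) and range R^(s) on the space P^(s) of homogeneous polynomials of degree s. Let f ∈ P^(s) and g ∈ P^(r). Then: if f ∈ N^(s) and g ∈ N^(r), then {f,g} ∈ N^(r+s−2); if f ∈ N^(s) and g ∈ R^(r), or f ∈ R^(s) and g ∈ N^(r), then {f,g} ∈ R^(r+s−2). -/

import Mathlib

/-!
The Lie derivative `L_Ω = {H_Ω, ·}` is a derivation of the Poisson bracket, by the Jacobi
identity: `L_Ω {f, g} = {L_Ω f, g} + {f, L_Ω g}`. Hence the bracket of two kernel elements lies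
in the kernel, and `{f, L_Ω h} = L_Ω {f, h}` when `L_Ω f = 0`. For polynomials the Jacobi
identity says that the commutator of the derivations `{h, ·}` and `{f, ·}` is `{{h, f}, ·}`;
both sides are derivations, so it suffices to compare them on the coordinates, where it reduces
to the Leibniz rule of `∂_i` for the bracket. Each term of `{f, g}` is a product of first
partial derivatives, which gives the degree `r + s - 2`.
-/

open MvPolynomial

/-- Polynomials in the `2N` phase-space variables `x_0,…,x_{N−1},y_0,…,y_{N−1}`:
`Sum.inl l` is the variable `x_l` and `Sum.inr l` is `y_l`. -/
abbrev Pol (N : ℕ) := MvPolynomial (Fin N ⊕ Fin N) ℝ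

/-- Poisson bracket `{f,g} = Σ_l (∂f/∂x_l ∂g/∂y_l − ∂f/∂y_l ∂g/∂x_l)`. -/
noncomputable def pbracket {N : ℕ} (f g : Pol N) : Pol N :=
  ∑ l : Fin N,
    (pderiv (Sum.inl l) f * pderiv (Sum.inr l) g -
      pderiv (Sum.inr l) f * pderiv (Sum.inl l) g)

/-- The quadratic form `H_Ω = (Ω/2) Σ_j (x_j² + y_j²)` as a polynomial. -/
noncomputable def HOmega (N : ℕ) (Ω : ℝ) : Pol N :=
  C (Ω / 2) * ∑ j : Fin N, ((X (Sum.inl j)) ^ 2 + (X (Sum.inr j)) ^ 2)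

/-- Lie derivative `L_Ω f := {H_Ω, f}`. -/
noncomputable def lOm (N : ℕ) (Ω : ℝ) (f : Pol N) : Pol N := pbracket (HOmega N Ω) f

/-- Membership in the kernel `N^(s)` of `L_Ω` on homogeneous polynomials of degree `s`. -/
def inKer (N : ℕ) (Ω : ℝ) (s : ℕ) (f : Pol N) : Prop :=
  f.IsHomogeneous s ∧ lOm N Ω f = 0

/-- Membership in the range `R^(s) = L_Ω(P^(s))`. -/
def inRan (N : ℕ) (Ω : ℝ) (s : ℕ) (f : Pol N) : Prop :=
  ∃ g : Pol N, g.IsHomogeneous s ∧ lOm N Ω g = f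

namespace MvPolynomial

variable {R σ : Type*} [CommSemiring R]

theorem pderiv_pderiv_comm (i j : σ) (f : MvPolynomial σ R) :
    pderiv i (pderiv j f) = pderiv j (pderiv i f) := by
  classical
  induction f using MvPolynomial.induction_on' with
  | add p q hp hq => simp only [map_add, hp, hq]
  | monomial m a =>
    simp only [pderiv_monomial, Finsupp.tsub_apply]
    rw [tsub_right_comm]
    by_cases h : i = j
    · subst h; rfl
    · simp only [Finsupp.single_eq_of_ne h, Finsupp.single_eq_of_ne (Ne.symm h), tsub_zero]
      ring_nf

theorem pderiv_eq_zero_of_isHomogeneous_zero {f : MvPolynomial σ R} (hf : f.IsHomogeneous 0)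
    (i : σ) : pderiv i f = 0 := by
  rw [totalDegree_eq_zero_iff_eq_C.mp ((totalDegree_zero_iff_isHomogeneous σ).mpr hf), pderiv_C]

end MvPolynomial

section PoissonBracket

variable {N : ℕ}

noncomputable def pbracketDerivation (f : Pol N) : Derivation ℝ (Pol N) (Pol N) :=
  ∑ l : Fin N,
    (pderiv (Sum.inl l) f • pderiv (Sum.inr l) - pderiv (Sum.inr l) f • pderiv (Sum.inl l))

theorem pbracketDerivation_apply (f g : Pol N) : pbracketDerivation f g = pbracket f g := by
  rw [pbracketDerivation, ← Derivation.coeFnAddMonoidHom_apply, map_sum, Finset.sum_apply]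
  simp [pbracket]

theorem pbracket_anticomm (f g : Pol N) : pbracket f g = -pbracket g f := by
  simp only [pbracket, ← Finset.sum_neg_distrib]
  exact Finset.sum_congr rfl fun _ _ => by ring

theorem pbracket_X_inl (f : Pol N) (k : Fin N) :
    pbracket f (X (Sum.inl k)) = -pderiv (Sum.inr k) f := by
  simp [pbracket, pderiv_X, Pi.single_apply]

theorem pbracket_X_inr (f : Pol N) (k : Fin N) :
    pbracket f (X (Sum.inr k)) = pderiv (Sum.inl k) f := by
  simp [pbracket, pderiv_X, Pi.single_apply]

theorem pderiv_pbracket (i : Fin N ⊕ Fin N) (f g : Pol N) :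
    pderiv i (pbracket f g) = pbracket (pderiv i f) g + pbracket f (pderiv i g) := by
  simp only [pbracket, map_sum, map_sub, pderiv_mul, pderiv_pderiv_comm i,
    ← Finset.sum_add_distrib]
  exact Finset.sum_congr rfl fun _ _ => by ring

theorem commutator_pbracketDerivation (h f : Pol N) :
    ⁅pbracketDerivation h, pbracketDerivation f⁆ = pbracketDerivation (pbracket h f) := by
  refine derivation_ext fun i => ?_
  rcases i with k | k <;>
    simp only [Derivation.commutator_apply, pbracketDerivation_apply, pbracket_X_inl,
      pbracket_X_inr, pderiv_pbracket, map_neg, pbracket_anticomm f (pderiv _ h)] <;> abel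

theorem pbracket_jacobi (h f g : Pol N) :
    pbracket h (pbracket f g) = pbracket (pbracket h f) g + pbracket f (pbracket h g) := by
  have := congrArg (· g) (commutator_pbracketDerivation h f)
  simp only [Derivation.commutator_apply, pbracketDerivation_apply] at this
  rw [← this, sub_add_cancel]

theorem pbracket_zero_left (g : Pol N) : pbracket 0 g = 0 := by
  simp [pbracket]

theorem pbracket_zero_right (f : Pol N) : pbracket f 0 = 0 := by
  simp [pbracket]

theorem MvPolynomial.IsHomogeneous.pbracket {f g : Pol N} {s r : ℕ} (hf : f.IsHomogeneous s)
    (hg : g.IsHomogeneous r) : (pbracket f g).IsHomogeneous (r + s - 2) := by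
  have summand : ∀ i j, (pderiv i f * pderiv j g).IsHomogeneous (r + s - 2) := by
    intro i j
    rcases Nat.eq_zero_or_pos s with rfl | hs
    · simp [pderiv_eq_zero_of_isHomogeneous_zero hf, isHomogeneous_zero]
    rcases Nat.eq_zero_or_pos r with rfl | hr
    · simp [pderiv_eq_zero_of_isHomogeneous_zero hg, isHomogeneous_zero]
    convert (hf.pderiv (i := i)).mul (hg.pderiv (i := j)) using 1
    omega
  exact IsHomogeneous.sum _ _ _ fun l _ => (summand _ _).sub (summand _ _)

end PoissonBracket

theorem lOm_pbracket (N : ℕ) (Ω : ℝ) (f g : Pol N) :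
    lOm N Ω (pbracket f g) = pbracket (lOm N Ω f) g + pbracket f (lOm N Ω g) :=
  pbracket_jacobi _ _ _

theorem stmt9 (N : ℕ) (Ω : ℝ) (r s : ℕ) (f g : Pol N) :
    (inKer N Ω s f → inKer N Ω r g → inKer N Ω (r + s - 2) (pbracket f g)) ∧
    (inKer N Ω s f → inRan N Ω r g → inRan N Ω (r + s - 2) (pbracket f g)) ∧
    (inRan N Ω s f → inKer N Ω r g → inRan N Ω (r + s - 2) (pbracket f g)) := by
  refine ⟨?_, ?_, ?_⟩
  · rintro ⟨hf, hLf⟩ ⟨hg, hLg⟩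
    refine ⟨hf.pbracket hg, ?_⟩
    rw [lOm_pbracket, hLf, hLg, pbracket_zero_left, pbracket_zero_right, add_zero]
  · rintro ⟨hf, hLf⟩ ⟨h, hh, rfl⟩
    refine ⟨pbracket f h, hf.pbracket hh, ?_⟩
    rw [lOm_pbracket, hLf, pbracket_zero_left, zero_add]
  · rintro ⟨h, hh, rfl⟩ ⟨hg, hLg⟩
    refine ⟨pbracket h g, hh.pbracket hg, ?_⟩
    rw [lOm_pbracket, hLg, pbracket_zero_right, add_zero]
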